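/- Let 1 ≤ m ≤ n be integers, p a prime, F : F_{p^n} → F_{p^m}, and c ∈ F_{p^m} with c ≠ 1. Then F is strictly perfect₁ c-nonlinear if and only if W_F(x,b)·conj(W_F(x,b·c)) = 0 for all x ∈ F_{p^n} and all b ∈ F_{p^m}\{0}. -/

import Mathlib

open Finset

noncomputable section

/-- Finite fields `GaloisField p n` are finite; fix a `Fintype` instance. -/
noncomputable instance (p n : ℕ) [Fact p.Prime] : Fintype (GaloisField p n) :=
  Fintype.ofFinite _

/-- `ζ_q = exp(2πi/q)`. -/
noncomputable def zetaC (q : ℕ) : ℂ := Complex.exp (2 * Real.pi * Complex.I / q)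

/-- `ζ_p^t` for `t ∈ F_p`, computed via the integer lift of `t`. -/
noncomputable def eChar (p : ℕ) (t : ZMod p) : ℂ := zetaC p ^ t.val

/-- The absolute trace `Tr_k : F_{p^k} → F_p`. -/
noncomputable def trAbs (p k : ℕ) [Fact p.Prime] (x : GaloisField p k) : ZMod p :=
  Algebra.trace (ZMod p) (GaloisField p k) x

/-- The Walsh transform `W_F(a,b) = ∑_x ζ_p^{Tr_m(b·F(x)) − Tr_n(a·x)}`. -/
noncomputable def Walsh (p n m : ℕ) [Fact p.Prime] (F : GaloisField p n → GaloisField p m)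
    (a : GaloisField p n) (b : GaloisField p m) : ℂ :=
  ∑ x : GaloisField p n, eChar p (trAbs p m (b * F x) - trAbs p n (a * x))

/-- The `c`-crosscorrelation `cC_{F,G}(u,b) = ∑_z ζ_p^{Tr_m(b(F(z+u) − c·G(z)))}`. -/
noncomputable def crossCorr (p n m : ℕ) [Fact p.Prime]
    (F G : GaloisField p n → GaloisField p m) (c : GaloisField p m)
    (u : GaloisField p n) (b : GaloisField p m) : ℂ :=
  ∑ x : GaloisField p n, eChar p (trAbs p m (b * (F (x + u) - c * G x)))

/-- The `c`-autocorrelation `cC_F = cC_{F,F}`. -/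
noncomputable def autoCorr (p n m : ℕ) [Fact p.Prime]
    (F : GaloisField p n → GaloisField p m) (c : GaloisField p m)
    (u : GaloisField p n) (b : GaloisField p m) : ℂ :=
  crossCorr p n m F F c u b

/-- `F` is perfect₁ `c`-nonlinear: `cC_F(u,b) = 0` for all `u ≠ 0`, `b ≠ 0`. -/
def PerfectCNonlinear1 (p n m : ℕ) [Fact p.Prime]
    (F : GaloisField p n → GaloisField p m) (c : GaloisField p m) : Prop :=
  ∀ u : GaloisField p n, u ≠ 0 → ∀ b : GaloisField p m, b ≠ 0 →
    autoCorr p n m F c u b = 0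

/-- `F` is strictly perfect₁ `c`-nonlinear: `cC_F(u,b) = 0` for all `u`, all `b ≠ 0`. -/
def StrictlyPerfectCNonlinear1 (p n m : ℕ) [Fact p.Prime]
    (F : GaloisField p n → GaloisField p m) (c : GaloisField p m) : Prop :=
  ∀ u : GaloisField p n, ∀ b : GaloisField p m, b ≠ 0 →
    autoCorr p n m F c u b = 0

/-- `F` is `c`-differential bent₁:
`W_F(x,b)·conj(W_F(x,bc)) = cC_F(0,b)` for all `x` and all `b ≠ 0`. -/
def CDifferentialBent1 (p n m : ℕ) [Fact p.Prime]
    (F : GaloisField p n → GaloisField p m) (c : GaloisField p m) : Prop :=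
  ∀ x : GaloisField p n, ∀ b : GaloisField p m, b ≠ 0 →
    Walsh p n m F x b * (starRingEnd ℂ) (Walsh p n m F x (b * c)) =
      autoCorr p n m F c 0 b


/-! The product `W_F(a,b)·conj(W_F(a,bc))` is, by a Wiener–Khinchin computation, the Fourier
transform of `u ↦ cC_F(u,b)` with respect to the primitive additive character
`x ↦ ζ_p^{Tr_n(x)}` of `F_{p^n}`. A function on a finite ring vanishes iff its Fourier transform
with respect to a primitive character does, by orthogonality of the characters `x ↦ ψ(a x)`. -/

open ComplexConjugate

namespace AddChar

theorem sum_mul_mul_conj_sum_mul {G : Type*} [AddCommGroup G] [Fintype G] (χ : AddChar G ℂ)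
    (f g : G → ℂ) :
    (∑ x, f x * χ x) * conj (∑ y, g y * χ y) = ∑ u, (∑ z, f (z + u) * conj (g z)) * χ u := by
  simp_rw [map_sum, map_mul, ← map_neg_eq_conj, Finset.sum_mul_sum, Finset.sum_mul]
  rw [Finset.sum_comm]
  conv_rhs => rw [Finset.sum_comm]
  refine sum_congr rfl fun z _ => ?_
  rw [← Equiv.sum_comp (Equiv.addLeft z)]
  refine sum_congr rfl fun u _ => ?_
  have hχ : χ (z + u) * χ (-z) = χ u := by rw [← map_add_eq_mul, add_neg_cancel_comm]
  simp only [Equiv.coe_addLeft]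
  linear_combination f (z + u) * conj (g z) * hχ

theorem IsPrimitive.eq_zero_of_fourier_eq_zero {R : Type*} [CommRing R] [Fintype R]
    {ψ : AddChar R ℂ} (hψ : ψ.IsPrimitive) {h : R → ℂ} (hh : ∀ a, ∑ u, h u * ψ (a * u) = 0) :
    h = 0 := by
  classical
  funext v
  have hshift (u a : R) : ψ (-(a * v)) * (h u * ψ (a * u)) = h u * ψ (a * (u - v)) := by
    rw [mul_sub, sub_eq_neg_add, map_add_eq_mul]; ring
  have inversion : ∑ a, ψ (-(a * v)) * ∑ u, h u * ψ (a * u) = h v * Fintype.card R := by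
    simp_rw [Finset.mul_sum]
    rw [Finset.sum_comm]
    simp_rw [hshift, ← Finset.mul_sum, sum_mulShift _ hψ]
    simp [sub_eq_zero]
  simpa [hh, Fintype.card_ne_zero, eq_comm] using inversion

end AddChar

section TraceCharacter

variable (p : ℕ) [Fact p.Prime]

theorem isPrimitiveRoot_zetaC : IsPrimitiveRoot (zetaC p) p :=
  Complex.isPrimitiveRoot_exp p (Fact.out : p.Prime).ne_zero

def eCharAddChar : AddChar (ZMod p) ℂ :=
  AddChar.zmodChar p (isPrimitiveRoot_zetaC p).pow_eq_one

theorem eCharAddChar_apply (t : ZMod p) : eCharAddChar p t = eChar p t := rfl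

theorem isPrimitive_eCharAddChar : (eCharAddChar p).IsPrimitive :=
  AddChar.zmodChar_primitive_of_primitive_root p (isPrimitiveRoot_zetaC p)

variable (k : ℕ)

def traceChar : AddChar (GaloisField p k) ℂ :=
  (eCharAddChar p).compAddMonoidHom (Algebra.trace (ZMod p) (GaloisField p k)).toAddMonoidHom

theorem traceChar_apply (x : GaloisField p k) : traceChar p k x = eChar p (trAbs p k x) := rfl

theorem isPrimitive_traceChar : (traceChar p k).IsPrimitive := by
  refine AddChar.IsPrimitive.of_ne_one (AddChar.ne_one_iff.2 ?_)
  obtain ⟨x, hx⟩ : ∃ x, trAbs p k x ≠ 0 := by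
    by_contra! h
    exact Algebra.trace_ne_zero (ZMod p) (GaloisField p k) (LinearMap.ext h)
  exact ⟨x, fun h => hx (((isPrimitive_eCharAddChar p).zmod_char_eq_one_iff p _).1 h)⟩

end TraceCharacter

section Correlation

variable {p n m : ℕ} [Fact p.Prime] (F : GaloisField p n → GaloisField p m)

theorem walsh_eq_sum_traceChar (a : GaloisField p n) (b : GaloisField p m) :
    Walsh p n m F a b = ∑ x, traceChar p m (b * F x) * (traceChar p n).mulShift (-a) x := by
  simp only [Walsh, AddChar.mulShift_apply, neg_mul, AddChar.map_neg_eq_inv, traceChar_apply,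
    ← eCharAddChar_apply, AddChar.map_sub_eq_div, div_eq_mul_inv]

theorem autoCorr_eq_sum_traceChar (c : GaloisField p m) (u : GaloisField p n)
    (b : GaloisField p m) :
    autoCorr p n m F c u b =
      ∑ z, traceChar p m (b * F (z + u)) * conj (traceChar p m (b * c * F z)) := by
  refine sum_congr rfl fun z _ => ?_
  rw [← AddChar.map_neg_eq_conj, ← AddChar.map_add_eq_mul, traceChar_apply]
  congr 3
  ring

theorem walsh_mul_conj_walsh (c : GaloisField p m) (a : GaloisField p n) (b : GaloisField p m) :
    Walsh p n m F a b * conj (Walsh p n m F a (b * c)) =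
      ∑ u, autoCorr p n m F c u b * traceChar p n (-a * u) := by
  simp_rw [walsh_eq_sum_traceChar, AddChar.sum_mul_mul_conj_sum_mul, autoCorr_eq_sum_traceChar,
    AddChar.mulShift_apply]

end Correlation

theorem statement_2_general (p n m : ℕ) [Fact p.Prime]
    (F : GaloisField p n → GaloisField p m) (c : GaloisField p m) :
    StrictlyPerfectCNonlinear1 p n m F c ↔
      ∀ x : GaloisField p n, ∀ b : GaloisField p m, b ≠ 0 →
        Walsh p n m F x b * (starRingEnd ℂ) (Walsh p n m F x (b * c)) = 0 := by
  simp_rw [walsh_mul_conj_walsh]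
  constructor
  · intro h a b hb
    simp [h _ b hb]
  · intro h u b hb
    have autoCorr_eq_zero := (isPrimitive_traceChar p n).eq_zero_of_fourier_eq_zero
      (h := fun v => autoCorr p n m F c v b) fun a => by simpa using h (-a) b hb
    exact congrFun autoCorr_eq_zero u

theorem statement_2 (p n m : ℕ) [Fact p.Prime] (hm : 1 ≤ m) (hmn : m ≤ n)
    (F : GaloisField p n → GaloisField p m) (c : GaloisField p m) (hc : c ≠ 1) :
    StrictlyPerfectCNonlinear1 p n m F c ↔
      ∀ x : GaloisField p n, ∀ b : GaloisField p m, b ≠ 0 →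
        Walsh p n m F x b * (starRingEnd ℂ) (Walsh p n m F x (b * c)) = 0 :=
  statement_2_general p n m F c
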